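/- arXiv:2605.07591 — 9 statements merged into one kernel-verified Lean document; each statement's English description precedes it below -/
import Mathlib

section
/- Suppose the irreducibility conditions hold: α < 1, β > 0, β+γ < 1, δ > 0, δ+φ < 1, κ < 1. Then A and S have the same characteristic polynomial; in particular, every complex eigenvalue of A is real (the characteristic polynomial of A splits over ℝ). -/
/-- The 4×4 tridiagonal row-stochastic matrix with parameters α,β,γ,δ,φ,κ. -/
noncomputable def Amat (α β γ δ φ κ : ℝ) : Matrix (Fin 4) (Fin 4) ℝ :=
  !![α, 1-α, 0, 0;
     β, γ, 1-β-γ, 0;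
     0, δ, φ, 1-δ-φ;
     0, 0, 1-κ, κ]

/-- The symmetrized tridiagonal matrix S with diagonal (α,γ,φ,κ) and
off-diagonal entries r₁ = √((1−α)β), r₂ = √((1−β−γ)δ), r₃ = √((1−δ−φ)(1−κ)). -/
noncomputable def Smat (α β γ δ φ κ : ℝ) : Matrix (Fin 4) (Fin 4) ℝ :=
  !![α, Real.sqrt ((1-α)*β), 0, 0;
     Real.sqrt ((1-α)*β), γ, Real.sqrt ((1-β-γ)*δ), 0;
     0, Real.sqrt ((1-β-γ)*δ), φ, Real.sqrt ((1-δ-φ)*(1-κ));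
     0, 0, Real.sqrt ((1-δ-φ)*(1-κ)), κ]

/-!
Expanding the determinant, the characteristic polynomial of a tridiagonal matrix depends on
its off-diagonal entries only through the products `M i (i+1) * M (i+1) i`. For `A` these
products are nonnegative, so `A` and its symmetrization `S` (whose off-diagonal entries are
their square roots) have the same characteristic polynomial, and that of the real symmetric
matrix `S` splits by the spectral theorem.
-/

open Matrix Polynomial

theorem Matrix.charpoly_tridiagonal_fin_four {R : Type*} [CommRing R]
    (a b c d p q r s t u : R) :
    (!![a, p, 0, 0; q, b, r, 0; 0, s, c, t; 0, 0, u, d]).charpoly =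
      (X - C a) * ((X - C b) * ((X - C c) * (X - C d) - C (t * u)) - C (r * s) * (X - C d))
        - C (p * q) * ((X - C c) * (X - C d) - C (t * u)) := by
  rw [charpoly, det_succ_row_zero, Fin.sum_univ_four]
  simp only [det_fin_three, charmatrix_apply, submatrix_apply, Fin.succAbove, diagonal_apply,
    of_apply, cons_val', cons_val, Fin.reduceSucc, Fin.reduceCastSucc, Fin.reduceLT, Fin.reduceEq,
    ↓reduceIte, Fin.val_zero, Fin.val_one, Fin.val_two, map_zero, map_mul]
  ring

theorem Matrix.charpoly_tridiagonal_fin_four_congr {R : Type*} [CommRing R]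
    {a b c d p q r s t u p' q' r' s' t' u' : R}
    (h₁ : p * q = p' * q') (h₂ : r * s = r' * s') (h₃ : t * u = t' * u') :
    (!![a, p, 0, 0; q, b, r, 0; 0, s, c, t; 0, 0, u, d]).charpoly =
      (!![a, p', 0, 0; q', b, r', 0; 0, s', c, t'; 0, 0, u', d]).charpoly := by
  rw [charpoly_tridiagonal_fin_four, charpoly_tridiagonal_fin_four, h₁, h₂, h₃]

theorem Matrix.isHermitian_symmetric_tridiagonal_fin_four {R : Type*} [CommRing R] [StarRing R]
    [TrivialStar R] (a b c d x y z : R) :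
    (!![a, x, 0, 0; x, b, y, 0; 0, y, c, z; 0, 0, z, d]).IsHermitian := by
  ext i j
  fin_cases i <;> fin_cases j <;> simp

theorem stmt_2_general (α β γ δ φ κ : ℝ)
    (hα1 : α ≤ 1) (hβ : 0 ≤ β) (hδ : 0 ≤ δ) (hκ1 : κ ≤ 1)
    (hβγ : β + γ ≤ 1) (hδφ : δ + φ ≤ 1) :
    Matrix.charpoly (Amat α β γ δ φ κ) = Matrix.charpoly (Smat α β γ δ φ κ) ∧
      Polynomial.Splits (Matrix.charpoly (Amat α β γ δ φ κ)) := by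
  have hchar : (Amat α β γ δ φ κ).charpoly = (Smat α β γ δ φ κ).charpoly := by
    unfold Amat Smat
    exact charpoly_tridiagonal_fin_four_congr
      (Real.mul_self_sqrt (mul_nonneg (by linarith) hβ)).symm
      (Real.mul_self_sqrt (mul_nonneg (by linarith) hδ)).symm
      (Real.mul_self_sqrt (mul_nonneg (by linarith) (by linarith))).symm
  have hS : (Smat α β γ δ φ κ).IsHermitian := by
    unfold Smat
    exact isHermitian_symmetric_tridiagonal_fin_four ..
  refine ⟨hchar, ?_⟩
  rw [hchar]
  exact hS.splits_charpoly

theorem stmt_2 (α β γ δ φ κ : ℝ)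
    (hα : 0 ≤ α) (hα1 : α ≤ 1) (hβ : 0 ≤ β) (hβ1 : β ≤ 1)
    (hγ : 0 ≤ γ) (hγ1 : γ ≤ 1) (hδ : 0 ≤ δ) (hδ1 : δ ≤ 1)
    (hφ : 0 ≤ φ) (hφ1 : φ ≤ 1) (hκ : 0 ≤ κ) (hκ1 : κ ≤ 1)
    (hβγ : β + γ ≤ 1) (hδφ : δ + φ ≤ 1)
    (irr1 : α < 1) (irr2 : 0 < β) (irr3 : β + γ < 1)
    (irr4 : 0 < δ) (irr5 : δ + φ < 1) (irr6 : κ < 1) :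
    Matrix.charpoly (Amat α β γ δ φ κ) = Matrix.charpoly (Smat α β γ δ φ κ) ∧
      Polynomial.Splits (Matrix.charpoly (Amat α β γ δ φ κ)) :=
  stmt_2_general α β γ δ φ κ hα1 hβ hδ hκ1 hβγ hδφ
end

section
/- If Δ₂ ≤ 0, then Δ₃ ≤ 0. -/
/-- Δₖ: the determinant of the leading k×k principal submatrix of a 4×4 matrix,
with Δ₀ = 1 (determinant of the empty matrix). -/
noncomputable def leadingMinor (M : Matrix (Fin 4) (Fin 4) ℝ) (k : ℕ) : ℝ :=
  if h : k ≤ 4 then (M.submatrix (Fin.castLE h) (Fin.castLE h)).det else 0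

theorem stmt_5 (α β γ δ φ κ : ℝ)
    (hα : 0 ≤ α) (hα1 : α ≤ 1) (hβ : 0 ≤ β) (hβ1 : β ≤ 1)
    (hγ : 0 ≤ γ) (hγ1 : γ ≤ 1) (hδ : 0 ≤ δ) (hδ1 : δ ≤ 1)
    (hφ : 0 ≤ φ) (hφ1 : φ ≤ 1) (hκ : 0 ≤ κ) (hκ1 : κ ≤ 1)
    (hβγ : β + γ ≤ 1) (hδφ : δ + φ ≤ 1)
    (h2 : leadingMinor (Smat α β γ δ φ κ) 2 ≤ 0) :
    leadingMinor (Smat α β γ δ φ κ) 3 ≤ 0 := by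
  set a := Real.sqrt ((1-α)*β) with ha
  set b := Real.sqrt ((1-β-γ)*δ) with hb
  have e2 : (Smat α β γ δ φ κ).submatrix (Fin.castLE (by norm_num : (2:ℕ) ≤ 4))
      (Fin.castLE (by norm_num)) = !![α, a; a, γ] := by
    ext i j
    fin_cases i <;> fin_cases j <;> rfl
  have e3 : (Smat α β γ δ φ κ).submatrix (Fin.castLE (by norm_num : (3:ℕ) ≤ 4))
      (Fin.castLE (by norm_num)) = !![α, a, 0; a, γ, b; 0, b, φ] := by
    ext i j
    fin_cases i <;> fin_cases j <;> rfl
  have h2' : α*γ - a*a ≤ 0 := by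
    have h := h2
    rw [leadingMinor, dif_pos (by norm_num : (2:ℕ) ≤ 4)] at h
    rw [e2, Matrix.det_fin_two_of] at h
    linarith
  rw [leadingMinor, dif_pos (by norm_num : (3:ℕ) ≤ 4), e3]
  have hb2 : b*b = (1-β-γ)*δ :=
    Real.mul_self_sqrt (mul_nonneg (by linarith) hδ)
  have hdet : Matrix.det !![α, a, 0; a, γ, b; 0, b, φ] = φ*(α*γ - a*a) - α*(b*b) := by
    rw [Matrix.det_fin_three]
    simp [Matrix.cons_val_zero, Matrix.cons_val_one]
    ring
  rw [hdet]
  nlinarith [mul_nonneg (mul_nonneg hα (by linarith : (0:ℝ) ≤ 1-β-γ)) hδ,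
    mul_nonneg hφ (neg_nonneg.2 h2')]
end

section
/- If Δ₃ ≤ 0 and Δ₂ ≥ 0, then Δ₄ ≤ 0. -/
lemma det_fin_four' (M : Matrix (Fin 4) (Fin 4) ℝ) : M.det =
    M 0 0 * (M 1 1 * (M 2 2 * M 3 3 - M 2 3 * M 3 2) - M 1 2 * (M 2 1 * M 3 3 - M 2 3 * M 3 1)
      + M 1 3 * (M 2 1 * M 3 2 - M 2 2 * M 3 1))
  - M 0 1 * (M 1 0 * (M 2 2 * M 3 3 - M 2 3 * M 3 2) - M 1 2 * (M 2 0 * M 3 3 - M 2 3 * M 3 0)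
      + M 1 3 * (M 2 0 * M 3 2 - M 2 2 * M 3 0))
  + M 0 2 * (M 1 0 * (M 2 1 * M 3 3 - M 2 3 * M 3 1) - M 1 1 * (M 2 0 * M 3 3 - M 2 3 * M 3 0)
      + M 1 3 * (M 2 0 * M 3 1 - M 2 1 * M 3 0))
  - M 0 3 * (M 1 0 * (M 2 1 * M 3 2 - M 2 2 * M 3 1) - M 1 1 * (M 2 0 * M 3 2 - M 2 2 * M 3 0)
      + M 1 2 * (M 2 0 * M 3 1 - M 2 1 * M 3 0)) := by
  have e1 : (Fin.succ 2 : Fin 4) = 3 := rfl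
  have e2 : Fin.succAbove (2 : Fin 4) (2 : Fin 3) = 3 := rfl
  have e3 : Fin.succAbove (1 : Fin 4) (2 : Fin 3) = 3 := rfl
  have e4 : (Fin.castSucc (2 : Fin 3) : Fin 4) = 2 := rfl
  have e5 : Fin.succAbove (3 : Fin 4) (2 : Fin 3) = 2 := rfl
  simp [Matrix.det_succ_row_zero, Fin.sum_univ_succ, e1, e2, e3, e4, e5]
  ring

lemma minor2 (M : Matrix (Fin 4) (Fin 4) ℝ) :
    leadingMinor M 2 = M 0 0 * M 1 1 - M 0 1 * M 1 0 := by
  rw [leadingMinor, dif_pos (by norm_num), Matrix.det_fin_two]; rfl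

lemma minor3 (M : Matrix (Fin 4) (Fin 4) ℝ) :
    leadingMinor M 3 = M 0 0 * M 1 1 * M 2 2 - M 0 0 * M 1 2 * M 2 1 - M 0 1 * M 1 0 * M 2 2
      + M 0 1 * M 1 2 * M 2 0 + M 0 2 * M 1 0 * M 2 1 - M 0 2 * M 1 1 * M 2 0 := by
  rw [leadingMinor, dif_pos (by norm_num), Matrix.det_fin_three]; rfl

lemma minor4 (M : Matrix (Fin 4) (Fin 4) ℝ) :
    leadingMinor M 4 =
    M 0 0 * (M 1 1 * (M 2 2 * M 3 3 - M 2 3 * M 3 2) - M 1 2 * (M 2 1 * M 3 3 - M 2 3 * M 3 1)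
      + M 1 3 * (M 2 1 * M 3 2 - M 2 2 * M 3 1))
  - M 0 1 * (M 1 0 * (M 2 2 * M 3 3 - M 2 3 * M 3 2) - M 1 2 * (M 2 0 * M 3 3 - M 2 3 * M 3 0)
      + M 1 3 * (M 2 0 * M 3 2 - M 2 2 * M 3 0))
  + M 0 2 * (M 1 0 * (M 2 1 * M 3 3 - M 2 3 * M 3 1) - M 1 1 * (M 2 0 * M 3 3 - M 2 3 * M 3 0)
      + M 1 3 * (M 2 0 * M 3 1 - M 2 1 * M 3 0))
  - M 0 3 * (M 1 0 * (M 2 1 * M 3 2 - M 2 2 * M 3 1) - M 1 1 * (M 2 0 * M 3 2 - M 2 2 * M 3 0)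
      + M 1 2 * (M 2 0 * M 3 1 - M 2 1 * M 3 0)) := by
  rw [leadingMinor, dif_pos (by norm_num), det_fin_four']; rfl

theorem stmt_6 (α β γ δ φ κ : ℝ)
    (hα : 0 ≤ α) (hα1 : α ≤ 1) (hβ : 0 ≤ β) (hβ1 : β ≤ 1)
    (hγ : 0 ≤ γ) (hγ1 : γ ≤ 1) (hδ : 0 ≤ δ) (hδ1 : δ ≤ 1)
    (hφ : 0 ≤ φ) (hφ1 : φ ≤ 1) (hκ : 0 ≤ κ) (hκ1 : κ ≤ 1)
    (hβγ : β + γ ≤ 1) (hδφ : δ + φ ≤ 1)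
    (h3 : leadingMinor (Smat α β γ δ φ κ) 3 ≤ 0)
    (h2 : 0 ≤ leadingMinor (Smat α β γ δ φ κ) 2) :
    leadingMinor (Smat α β γ δ φ κ) 4 ≤ 0 := by
  have h34 : (0:ℝ) ≤ (1-δ-φ)*(1-κ) := mul_nonneg (by linarith) (by linarith)
  have hr3 : Real.sqrt ((1-δ-φ)*(1-κ)) * Real.sqrt ((1-δ-φ)*(1-κ)) = (1-δ-φ)*(1-κ) :=
    Real.mul_self_sqrt h34
  rw [minor3] at h3
  rw [minor2] at h2
  rw [minor4]
  simp only [Smat] at h3 h2 ⊢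
  norm_num [Matrix.cons_val_zero, Matrix.cons_val_one, Matrix.head_cons, Matrix.cons_val_two, Matrix.tail_cons, Matrix.cons_val_three, Matrix.head_fin_const, Matrix.vecHead, Matrix.vecTail] at h3 h2 ⊢
  set t := Real.sqrt ((1-δ-φ)*(1-κ)) with ht
  set u := Real.sqrt ((1-α)*β) with hu
  set v := Real.sqrt ((1-β-γ)*δ) with hv
  nlinarith [mul_nonneg hκ (by linarith : (0:ℝ) ≤ u*u*φ + α*(v*v) - α*γ*φ),
    mul_nonneg (by linarith : (0:ℝ) ≤ α*γ - u*u) h34, hr3]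
end

section
/- Assume Δₖ ≠ 0 for k = 1,2,3,4. Then the sequence (Δ₀, Δ₁, Δ₂, Δ₃, Δ₄) has at most two sign changes, i.e. there are at most two indices k ∈ {0,1,2,3} with Δₖ · Δₖ₊₁ < 0. -/
/-!
Expanding along the last row gives the three-term recurrence
`Δ₄ = κ Δ₃ - r₃² Δ₂`, so `Δ₃ Δ₄ = κ Δ₃² - r₃² Δ₂ Δ₃`. With `κ ≥ 0`, a sign change between
`Δ₂` and `Δ₃` therefore excludes one between `Δ₃` and `Δ₄`; and `Δ₀ Δ₁ = α ≥ 0` is never a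
sign change. So the sign changes lie in `{1, 2, 3}` and do not contain both `2` and `3`.
-/

lemma leadingMinor_zero (M : Matrix (Fin 4) (Fin 4) ℝ) : leadingMinor M 0 = 1 := by
  simp [leadingMinor]

lemma leadingMinor_one (M : Matrix (Fin 4) (Fin 4) ℝ) : leadingMinor M 1 = M 0 0 := by
  simp [leadingMinor]

lemma leadingMinor_four_of_tridiagonal (M : Matrix (Fin 4) (Fin 4) ℝ)
    (h03 : M 0 3 = 0) (h13 : M 1 3 = 0) (h30 : M 3 0 = 0) (h31 : M 3 1 = 0) :
    leadingMinor M 4 = M 3 3 * leadingMinor M 3 - M 2 3 * M 3 2 * leadingMinor M 2 := by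
  simp [leadingMinor, Matrix.det_succ_row_zero, Fin.sum_univ_succ, Fin.succAbove,
    h03, h13, h30, h31]
  ring

lemma leadingMinor_Smat_four (α β γ δ φ κ : ℝ) :
    leadingMinor (Smat α β γ δ φ κ) 4 =
      κ * leadingMinor (Smat α β γ δ φ κ) 3
        - √((1-δ-φ)*(1-κ)) * √((1-δ-φ)*(1-κ)) * leadingMinor (Smat α β γ δ φ κ) 2 :=
  leadingMinor_four_of_tridiagonal _ rfl rfl rfl rfl

lemma mul_three_term_nonneg_of_mul_neg {a b d c : ℝ} (hd : 0 ≤ d) (hc : 0 ≤ c)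
    (hab : a * b < 0) : 0 ≤ b * (d * b - c * a) := by
  nlinarith [mul_nonneg hd (mul_self_nonneg b)]

lemma card_filter_range_four_le_two (p : ℕ → Prop) [DecidablePred p]
    (h0 : ¬ p 0) (h23 : ¬ (p 2 ∧ p 3)) : ((Finset.range 4).filter p).card ≤ 2 := by
  rw [show Finset.range 4 = {0, 1, 2, 3} from rfl]
  simp only [Finset.filter_insert, Finset.filter_singleton, h0, if_false]
  split_ifs <;> simp_all

theorem stmt_7_general (α β γ δ φ κ : ℝ)
    (hα : 0 ≤ α) (hκ : 0 ≤ κ) :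
    ((Finset.range 4).filter (fun k =>
        leadingMinor (Smat α β γ δ φ κ) k
          * leadingMinor (Smat α β γ δ φ κ) (k + 1) < 0)).card ≤ 2 := by
  apply card_filter_range_four_le_two
  · rw [leadingMinor_zero, one_mul, leadingMinor_one]
    exact hα.not_gt
  · rintro ⟨h23, h34⟩
    rw [leadingMinor_Smat_four] at h34
    exact (mul_three_term_nonneg_of_mul_neg hκ (mul_self_nonneg _) h23).not_gt h34

theorem stmt_7 (α β γ δ φ κ : ℝ)
    (hα : 0 ≤ α) (hα1 : α ≤ 1) (hβ : 0 ≤ β) (hβ1 : β ≤ 1)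
    (hγ : 0 ≤ γ) (hγ1 : γ ≤ 1) (hδ : 0 ≤ δ) (hδ1 : δ ≤ 1)
    (hφ : 0 ≤ φ) (hφ1 : φ ≤ 1) (hκ : 0 ≤ κ) (hκ1 : κ ≤ 1)
    (hβγ : β + γ ≤ 1) (hδφ : δ + φ ≤ 1)
    (hΔ : ∀ k, 1 ≤ k → k ≤ 4 → leadingMinor (Smat α β γ δ φ κ) k ≠ 0) :
    ((Finset.range 4).filter (fun k =>
        leadingMinor (Smat α β γ δ φ κ) k
          * leadingMinor (Smat α β γ δ φ κ) (k + 1) < 0)).card ≤ 2 :=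
  stmt_7_general α β γ δ φ κ hα hκ
end

section
/- Assume Δₖ ≠ 0 for k = 1,2,3,4. Then S has at most two negative eigenvalues: the number of roots of the characteristic polynomial of S, counted with multiplicity, that lie in (−∞, 0) is at most 2. -/
/-!
The quadratic form of `S` restricted to the coordinate plane of `e₁` and `e₄` is `α x₁² + κ x₄²`,
because `S₁₄ = 0`; it is nonnegative there. Any subspace on which a symmetric operator's form is
nonnegative injects, via the coordinates along eigenvectors of nonnegative eigenvalues, into the
span of those eigenvectors. Hence at least two of the four eigenvalues of `S` are nonnegative.
-/

open Module RCLike Matrix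
open scoped InnerProductSpace ComplexOrder

namespace LinearMap.IsSymmetric

variable {𝕜 E ι : Type*} [RCLike 𝕜] [NormedAddCommGroup E] [InnerProductSpace 𝕜 E] [Fintype ι]
  {T : E →ₗ[𝕜] E} (hT : T.IsSymmetric) {b : OrthonormalBasis ι 𝕜 E} {μ : ι → ℝ}
  (hb : ∀ i, T (b i) = (μ i : 𝕜) • b i)
include hT hb

theorem re_inner_map_self_eq_sum (x : E) :
    re ⟪T x, x⟫_𝕜 = ∑ i, μ i * ‖⟪b i, x⟫_𝕜‖ ^ 2 := by
  have hcoord (i : ι) : ⟪T x, b i⟫_𝕜 * ⟪b i, x⟫_𝕜 = ((μ i * ‖⟪b i, x⟫_𝕜‖ ^ 2 : ℝ) : 𝕜) := by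
    rw [hT, hb, inner_smul_right, mul_assoc, ← inner_conj_symm, RCLike.conj_mul]
    push_cast; ring
  rw [← b.sum_inner_mul_inner, Finset.sum_congr rfl fun i _ => hcoord i, ← ofReal_sum, ofReal_re]

theorem finrank_le_card_nonneg_of_re_inner_nonneg (W : Submodule 𝕜 E)
    (hW : ∀ x ∈ W, 0 ≤ re ⟪T x, x⟫_𝕜) :
    finrank 𝕜 W ≤ Fintype.card {i // 0 ≤ μ i} := by
  let coords : W →ₗ[𝕜] {i // 0 ≤ μ i} → 𝕜 :=
    (LinearMap.pi fun i : {i // 0 ≤ μ i} => innerₛₗ 𝕜 (b i)).comp W.subtype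
  suffices Function.Injective coords by
    simpa using LinearMap.finrank_le_finrank_of_injective this
  rw [← LinearMap.ker_eq_bot, Submodule.eq_bot_iff]
  rintro ⟨x, hxW⟩ hx
  have hnonneg (i : ι) (hi : 0 ≤ μ i) : ⟪b i, x⟫_𝕜 = 0 := congr_fun hx ⟨i, hi⟩
  have hterm (i : ι) : μ i * ‖⟪b i, x⟫_𝕜‖ ^ 2 ≤ 0 := by
    rcases le_or_gt 0 (μ i) with hi | hi
    · simp [hnonneg i hi]
    · exact mul_nonpos_of_nonpos_of_nonneg hi.le (by positivity)
  have hsum := Finset.sum_eq_zero_iff_of_nonpos (fun i _ => hterm i) |>.mp <|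
    le_antisymm (Finset.sum_nonpos fun i _ => hterm i) (re_inner_map_self_eq_sum hT hb x ▸ hW x hxW)
  have hzero (i : ι) : ⟪b i, x⟫_𝕜 = 0 := by
    rcases le_or_gt 0 (μ i) with hi | hi
    · exact hnonneg i hi
    · simpa [hi.ne] using hsum i (Finset.mem_univ _)
  rw [Submodule.mk_eq_zero, ← b.sum_repr' x]
  simp [hzero]

end LinearMap.IsSymmetric

namespace Matrix.IsHermitian

variable {𝕜 m n : Type*} [RCLike 𝕜] [Fintype m] [Fintype n] [DecidableEq m] [DecidableEq n]

theorem card_le_card_nonneg_eigenvalues {A : Matrix n n 𝕜} (hA : A.IsHermitian) (e : m ↪ n)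
    (he : (A.submatrix e e).PosSemidef) :
    Fintype.card m ≤ Fintype.card {i // 0 ≤ hA.eigenvalues i} := by
  have hT := isSymmetric_toEuclideanLin_iff.mpr hA
  have hb (i : n) : toEuclideanLin A (hA.eigenvectorBasis i) =
      (hA.eigenvalues i : 𝕜) • hA.eigenvectorBasis i :=
    WithLp.ofLp_injective 2 <| by
      rw [WithLp.ofLp_smul, ← RCLike.real_smul_eq_coe_smul]
      exact hA.mulVec_eigenvectorBasis i
  -- `P` extends vectors on `m` by zero along `e`.
  let P : Matrix n m 𝕜 := (1 : Matrix n n 𝕜).submatrix (Equiv.refl n) e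
  have hPP : Pᴴ * P = 1 := by
    rw [conjTranspose_submatrix, conjTranspose_one, mul_submatrix_one]
    exact submatrix_one_embedding e
  have hPAP : Pᴴ * A * P = A.submatrix e e := by
    rw [conjTranspose_submatrix, conjTranspose_one, mul_submatrix_one, one_submatrix_mul]
    rfl
  have hP : Function.Injective (toEuclideanLin P) := by
    intro x y hxy
    exact WithLp.ofLp_injective 2 <| by
      simpa [mulVec_mulVec, hPP] using congr_arg (fun z => Pᴴ *ᵥ WithLp.ofLp z) hxy
  calc Fintype.card m = finrank 𝕜 (LinearMap.range (toEuclideanLin P)) := by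
        rw [LinearMap.finrank_range_of_inj hP, finrank_euclideanSpace]
    _ ≤ _ := hT.finrank_le_card_nonneg_of_re_inner_nonneg hb _ <| by
        rintro _ ⟨y, rfl⟩
        rw [hT, EuclideanSpace.inner_eq_star_dotProduct, dotProduct_comm]
        have := he.dotProduct_mulVec_nonneg y.ofLp
        rw [← hPAP, ← mulVec_mulVec, ← mulVec_mulVec, dotProduct_mulVec, ← star_mulVec] at this
        exact (RCLike.nonneg_iff.mp this).1

theorem card_neg_eigenvalues_add_card_le {A : Matrix n n 𝕜} (hA : A.IsHermitian) (e : m ↪ n)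
    (he : (A.submatrix e e).PosSemidef) :
    Fintype.card {i // hA.eigenvalues i < 0} + Fintype.card m ≤ Fintype.card n := by
  have hm := hA.card_le_card_nonneg_eigenvalues e he
  have hsplit := Finset.card_filter_add_card_filter_not (s := Finset.univ)
    fun i => hA.eigenvalues i < 0
  simp only [not_lt] at hsplit
  simp only [Fintype.card_subtype] at hm ⊢
  rw [Finset.card_univ] at hsplit
  omega

theorem card_filter_roots_charpoly {A : Matrix n n ℝ} (hA : A.IsHermitian) (p : ℝ → Prop)
    [DecidablePred p] :
    (A.charpoly.roots.filter p).card = Fintype.card {i // p (hA.eigenvalues i)} := by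
  rw [hA.roots_charpoly_eq_eigenvalues, Multiset.filter_map, Multiset.card_map,
    Fintype.card_subtype]
  rfl

end Matrix.IsHermitian

theorem Smat_isHermitian (α β γ δ φ κ : ℝ) : (Smat α β γ δ φ κ).IsHermitian := by
  ext i j
  fin_cases i <;> fin_cases j <;> simp [Smat]

theorem Smat_submatrix_corners (α β γ δ φ κ : ℝ) :
    (Smat α β γ δ φ κ).submatrix ![0, 3] ![0, 3] = diagonal ![α, κ] := by
  ext i j
  fin_cases i <;> fin_cases j <;> simp [Smat]

theorem stmt_8_general (α β γ δ φ κ : ℝ)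
    (hα : 0 ≤ α) (hκ : 0 ≤ κ) :
    ((Matrix.charpoly (Smat α β γ δ φ κ)).roots.filter (fun x : ℝ => x < 0)).card
      ≤ 2 := by
  have hS := Smat_isHermitian α β γ δ φ κ
  let corners : Fin 2 ↪ Fin 4 := ⟨![0, 3], by decide⟩
  have hcorners : ((Smat α β γ δ φ κ).submatrix corners corners).PosSemidef := by
    rw [show ⇑corners = ![0, 3] from rfl, Smat_submatrix_corners, posSemidef_diagonal_iff]
    simp [Fin.forall_fin_two, hα, hκ]
  have hcount := hS.card_neg_eigenvalues_add_card_le corners hcorners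
  rw [hS.card_filter_roots_charpoly]
  simp only [Fintype.card_fin] at hcount
  omega

theorem stmt_8 (α β γ δ φ κ : ℝ)
    (hα : 0 ≤ α) (hα1 : α ≤ 1) (hβ : 0 ≤ β) (hβ1 : β ≤ 1)
    (hγ : 0 ≤ γ) (hγ1 : γ ≤ 1) (hδ : 0 ≤ δ) (hδ1 : δ ≤ 1)
    (hφ : 0 ≤ φ) (hφ1 : φ ≤ 1) (hκ : 0 ≤ κ) (hκ1 : κ ≤ 1)
    (hβγ : β + γ ≤ 1) (hδφ : δ + φ ≤ 1)
    (hΔ : ∀ k, 1 ≤ k → k ≤ 4 → leadingMinor (Smat α β γ δ φ κ) k ≠ 0) :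
    ((Matrix.charpoly (Smat α β γ δ φ κ)).roots.filter (fun x : ℝ => x < 0)).card
      ≤ 2 :=
  stmt_8_general α β γ δ φ κ hα hκ
end

section
/- Suppose the irreducibility conditions hold: α < 1, β > 0, β+γ < 1, δ > 0, δ+φ < 1, κ < 1. Then there exists a sequence of parameter tuples (αₙ, βₙ, γₙ, δₙ, φₙ, κₙ) converging to (α, β, γ, δ, φ, κ) such that for every n: (i) 0 ≤ αₙ, βₙ, γₙ, δₙ, φₙ, κₙ ≤ 1, βₙ+γₙ ≤ 1, δₙ+φₙ ≤ 1 and the irreducibility conditions αₙ < 1, βₙ > 0, βₙ+γₙ < 1, δₙ > 0, δₙ+φₙ < 1, κₙ < 1 hold (so A(αₙ,βₙ,γₙ,δₙ,φₙ,κₙ) is an irreducible tridiagonal stochastic matrix and A(αₙ,...) → A entrywise), and (ii) all four leading principal minors Δ₁, Δ₂, Δ₃, Δ₄ of the corresponding symmetrized matrix S(αₙ,βₙ,γₙ,δₙ,φₙ,κₙ) are nonzero. -/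
/-!
Move `a, c, p, k` along straight segments from `(α, γ, φ, κ)` to `(1, 1 - β, 1 - δ, (1 + κ) / 2)`,
keeping `b = β`, `d = δ`. Every parameter stays in the irreducible region for `t ∈ (0, 1)`, and at
`t = 1` all off-diagonal entries of `S` vanish, so `S` is diagonal with non-zero diagonal. The leading
minors of a symmetric tridiagonal matrix are continuants in its diagonal and squared off-diagonal
entries, hence polynomial in `t`; being non-zero at `t = 1`, their zeros cannot accumulate at `t = 0`,
and a sequence `tₙ ↓ 0` avoiding them gives the approximating parameters.
-/

open Filter Topology Set AffineMap

def continuant {R : Type*} [CommRing R] (d s : ℕ → R) : ℕ → R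
  | 0 => 1
  | 1 => d 0
  | n + 2 => d (n + 1) * continuant d s (n + 1) - s n * continuant d s n

theorem continuant_zero_right {R : Type*} [CommRing R] (d : ℕ → R) (n : ℕ) :
    continuant d 0 n = ∏ i ∈ Finset.range n, d i := by
  induction n using continuant.induct with
  | case1 => simp [continuant]
  | case2 => simp [continuant]
  | case3 n ih _ => simp [continuant, ih, Finset.prod_range_succ, mul_comm]

theorem analyticAt_continuant {𝕜 : Type*} [NontriviallyNormedField 𝕜] {d s : 𝕜 → ℕ → 𝕜}
    {x : 𝕜} (hd : ∀ i, AnalyticAt 𝕜 (d · i) x) (hs : ∀ i, AnalyticAt 𝕜 (s · i) x) (n : ℕ) :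
    AnalyticAt 𝕜 (fun t => continuant (d t) (s t) n) x := by
  induction n using continuant.induct with
  | case1 => simpa [continuant] using analyticAt_const
  | case2 => simpa [continuant] using hd 0
  | case3 n _ _ => simp only [continuant]; fun_prop

theorem AnalyticOnNhd.eventually_ne_zero {𝕜 E : Type*} [NontriviallyNormedField 𝕜]
    [NormedAddCommGroup E] [NormedSpace 𝕜 E] {f : 𝕜 → E} {U : Set 𝕜}
    (hf : AnalyticOnNhd 𝕜 f U) (hU : IsPreconnected U) {x y : 𝕜} (hx : x ∈ U) (hy : y ∈ U)
    (hfy : f y ≠ 0) : ∀ᶠ z in 𝓝[≠] x, f z ≠ 0 := by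
  by_contra h
  exact hfy (hf.eqOn_zero_of_preconnected_of_frequently_eq_zero hU hx (by simpa using h) hy)

theorem eventually_continuant_ne_zero {d s : ℝ → ℕ → ℝ}
    (hd : ∀ i, AnalyticOnNhd ℝ (d · i) univ) (hs : ∀ i, AnalyticOnNhd ℝ (s · i) univ)
    {y : ℝ} (N : ℕ) (hdy : ∀ i < N, d y i ≠ 0) (hsy : s y = 0) (x : ℝ) :
    ∀ᶠ t in 𝓝[≠] x, ∀ j ≤ N, continuant (d t) (s t) j ≠ 0 := by
  refine (eventually_all_finite (finite_Iic N)).2 fun j hj => ?_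
  refine AnalyticOnNhd.eventually_ne_zero
    (fun t _ => analyticAt_continuant (hd · t trivial) (hs · t trivial) j)
    isPreconnected_univ (mem_univ x) (mem_univ y) ?_
  rw [hsy, continuant_zero_right]
  exact Finset.prod_ne_zero_iff.2 fun i hi => hdy i ((Finset.mem_range.1 hi).trans_le hj)

theorem leadingMinor_symm_tridiagonal (a c p k r₁ r₂ r₃ : ℝ) {j : ℕ} (hj : j ≤ 4) :
    leadingMinor !![a, r₁, 0, 0; r₁, c, r₂, 0; 0, r₂, p, r₃; 0, 0, r₃, k] j =
      continuant (fun i => [a, c, p, k].getD i 0)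
        (fun i => [r₁ * r₁, r₂ * r₂, r₃ * r₃].getD i 0) j := by
  interval_cases j <;>
    simp [leadingMinor, Matrix.det_succ_row_zero, Fin.sum_univ_succ, Fin.succAbove, Fin.castLE,
      continuant] <;> ring

def smatMinor (a b c d p k : ℝ) : ℕ → ℝ :=
  continuant (fun i => [a, c, p, k].getD i 0)
    (fun i => [(1 - a) * b, (1 - b - c) * d, (1 - d - p) * (1 - k)].getD i 0)

theorem leadingMinor_Smat {a b c d p k : ℝ} (h₁ : 0 ≤ (1 - a) * b) (h₂ : 0 ≤ (1 - b - c) * d)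
    (h₃ : 0 ≤ (1 - d - p) * (1 - k)) {j : ℕ} (hj : j ≤ 4) :
    leadingMinor (Smat a b c d p k) j = smatMinor a b c d p k j := by
  rw [Smat, leadingMinor_symm_tridiagonal _ _ _ _ _ _ _ hj, Real.mul_self_sqrt h₁,
    Real.mul_self_sqrt h₂, Real.mul_self_sqrt h₃, smatMinor]

theorem eventually_smatMinor_segment_ne_zero {α β γ δ φ κ : ℝ} (hβ : β ≠ 1) (hδ : δ ≠ 1)
    (hκ : κ ≠ -1) :
    ∀ᶠ t in 𝓝[≠] (0 : ℝ), ∀ j ≤ 4, smatMinor (lineMap α 1 t) β (lineMap γ (1 - β) t) δ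
      (lineMap φ (1 - δ) t) (lineMap κ ((1 + κ) / 2) t) j ≠ 0 := by
  refine eventually_continuant_ne_zero (fun i t _ => ?_) (fun i t _ => ?_) (y := 1) 4
    (fun i hi => ?_) ?_ 0
  · rcases i with _ | _ | _ | _ | i <;> simp [lineMap_apply_ring'] <;> fun_prop
  · rcases i with _ | _ | _ | i <;> simp [lineMap_apply_ring'] <;> fun_prop
  · interval_cases i <;> simp <;> grind
  · funext i
    rcases i with _ | _ | _ | i <;> simp

theorem lineMap_mem_Ico {k : Type*} [Field k] [LinearOrder k] [IsStrictOrderedRing k]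
    {x y t : k} (h : x < y) (ht : t ∈ Ico 0 1) : lineMap x y t ∈ Ico x y :=
  ⟨(left_le_lineMap_iff_nonneg h).2 ht.1, (lineMap_lt_right_iff_lt ht.2).2 h⟩

theorem stmt_9_general (α β γ δ φ κ : ℝ)
    (hα : 0 ≤ α)
    (hγ : 0 ≤ γ)
    (hφ : 0 ≤ φ) (hκ : 0 ≤ κ)
    (irr1 : α < 1) (irr2 : 0 < β) (irr3 : β + γ < 1)
    (irr4 : 0 < δ) (irr5 : δ + φ < 1) (irr6 : κ < 1) :
    ∃ a b c d p k : ℕ → ℝ,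
      Filter.Tendsto a Filter.atTop (nhds α) ∧
      Filter.Tendsto b Filter.atTop (nhds β) ∧
      Filter.Tendsto c Filter.atTop (nhds γ) ∧
      Filter.Tendsto d Filter.atTop (nhds δ) ∧
      Filter.Tendsto p Filter.atTop (nhds φ) ∧
      Filter.Tendsto k Filter.atTop (nhds κ) ∧
      ∀ n : ℕ,
        (0 ≤ a n ∧ a n ≤ 1) ∧ (0 ≤ b n ∧ b n ≤ 1) ∧ (0 ≤ c n ∧ c n ≤ 1) ∧
        (0 ≤ d n ∧ d n ≤ 1) ∧ (0 ≤ p n ∧ p n ≤ 1) ∧ (0 ≤ k n ∧ k n ≤ 1) ∧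
        b n + c n ≤ 1 ∧ d n + p n ≤ 1 ∧
        (a n < 1 ∧ 0 < b n ∧ b n + c n < 1 ∧ 0 < d n ∧ d n + p n < 1 ∧ k n < 1) ∧
        (∀ j : ℕ, 1 ≤ j → j ≤ 4 →
          leadingMinor (Smat (a n) (b n) (c n) (d n) (p n) (k n)) j ≠ 0) := by
  have hminors := eventually_smatMinor_segment_ne_zero (α := α) (γ := γ) (φ := φ)
    (by linarith : β < 1).ne (by linarith : δ < 1).ne (by linarith : -1 < κ).ne'
  obtain ⟨t, ht, hgood⟩ := exists_seq_forall_of_frequently (Eventually.and (f := 𝓝[>] (0 : ℝ))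
    (nhdsGT_le_nhdsNE 0 hminors) (Ioo_mem_nhdsGT one_pos)).frequently
  have ht0 : Tendsto t atTop (𝓝 0) := tendsto_nhds_of_tendsto_nhdsWithin ht
  have hlim (x y : ℝ) : Tendsto (fun n => lineMap x y (t n)) atTop (𝓝 x) := by
    simpa using tendsto_const_nhds.lineMap tendsto_const_nhds ht0
  refine ⟨_, fun _ => β, _, fun _ => δ, _, _, hlim α 1, tendsto_const_nhds, hlim γ (1 - β),
    tendsto_const_nhds, hlim φ (1 - δ), hlim κ ((1 + κ) / 2), fun n => ?_⟩
  obtain ⟨hnz, htn⟩ := hgood n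
  replace htn : t n ∈ Ico 0 1 := Ioo_subset_Ico_self htn
  obtain ⟨ha, ha'⟩ := lineMap_mem_Ico irr1 htn
  obtain ⟨hc, hc'⟩ := lineMap_mem_Ico (by linarith : γ < 1 - β) htn
  obtain ⟨hp, hp'⟩ := lineMap_mem_Ico (by linarith : φ < 1 - δ) htn
  obtain ⟨hk, hk'⟩ := lineMap_mem_Ico (by linarith : κ < (1 + κ) / 2) htn
  refine ⟨⟨by linarith, by linarith⟩, ⟨by linarith, by linarith⟩, ⟨by linarith, by linarith⟩,
    ⟨by linarith, by linarith⟩, ⟨by linarith, by linarith⟩, ⟨by linarith, by linarith⟩,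
    by linarith, by linarith, ⟨by linarith, irr2, by linarith, irr4, by linarith, by linarith⟩,
    fun j _ hj => ?_⟩
  rw [leadingMinor_Smat (mul_nonneg (by linarith) (by linarith))
    (mul_nonneg (by linarith) (by linarith)) (mul_nonneg (by linarith) (by linarith)) hj]
  exact hnz j hj

theorem stmt_9 (α β γ δ φ κ : ℝ)
    (hα : 0 ≤ α) (hα1 : α ≤ 1) (hβ : 0 ≤ β) (hβ1 : β ≤ 1)
    (hγ : 0 ≤ γ) (hγ1 : γ ≤ 1) (hδ : 0 ≤ δ) (hδ1 : δ ≤ 1)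
    (hφ : 0 ≤ φ) (hφ1 : φ ≤ 1) (hκ : 0 ≤ κ) (hκ1 : κ ≤ 1)
    (hβγ : β + γ ≤ 1) (hδφ : δ + φ ≤ 1)
    (irr1 : α < 1) (irr2 : 0 < β) (irr3 : β + γ < 1)
    (irr4 : 0 < δ) (irr5 : δ + φ < 1) (irr6 : κ < 1) :
    ∃ a b c d p k : ℕ → ℝ,
      Filter.Tendsto a Filter.atTop (nhds α) ∧
      Filter.Tendsto b Filter.atTop (nhds β) ∧
      Filter.Tendsto c Filter.atTop (nhds γ) ∧
      Filter.Tendsto d Filter.atTop (nhds δ) ∧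
      Filter.Tendsto p Filter.atTop (nhds φ) ∧
      Filter.Tendsto k Filter.atTop (nhds κ) ∧
      ∀ n : ℕ,
        (0 ≤ a n ∧ a n ≤ 1) ∧ (0 ≤ b n ∧ b n ≤ 1) ∧ (0 ≤ c n ∧ c n ≤ 1) ∧
        (0 ≤ d n ∧ d n ≤ 1) ∧ (0 ≤ p n ∧ p n ≤ 1) ∧ (0 ≤ k n ∧ k n ≤ 1) ∧
        b n + c n ≤ 1 ∧ d n + p n ≤ 1 ∧
        (a n < 1 ∧ 0 < b n ∧ b n + c n < 1 ∧ 0 < d n ∧ d n + p n < 1 ∧ k n < 1) ∧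
        (∀ j : ℕ, 1 ≤ j → j ≤ 4 →
          leadingMinor (Smat (a n) (b n) (c n) (d n) (p n) (k n)) j ≠ 0) :=
  stmt_9_general α β γ δ φ κ hα hγ hφ hκ irr1 irr2 irr3 irr4 irr5 irr6
end

section
/- Suppose the irreducibility conditions hold: α < 1, β > 0, β+γ < 1, δ > 0, δ+φ < 1, κ < 1. Then A has at most two negative eigenvalues: the number of roots of the characteristic polynomial of A, counted with multiplicity, that lie in (−∞, 0) is at most 2. -/
open Polynomial Multiset

theorem Multiset.esymm_pos {R : Type*} [CommSemiring R] [PartialOrder R] [IsStrictOrderedRing R]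
    {s : Multiset R} (hs : ∀ x ∈ s, 0 < x) {k : ℕ} (hk : k ≤ card s) : 0 < s.esymm k := by
  have hne : powersetCard k s ≠ 0 := by
    rw [← card_pos, card_powersetCard]
    exact Nat.choose_pos hk
  have hprod : ∀ t ∈ powersetCard k s, (fun _ => (0 : R)) t < t.prod := fun t ht =>
    prod_pos fun x hx => hs x (mem_of_le (mem_powersetCard.1 ht).1 hx)
  simpa [esymm] using sum_lt_sum_of_nonempty hne hprod

theorem Polynomial.coeff_pos_of_forall_roots_neg {R : Type*} [CommRing R] [LinearOrder R]
    [IsStrictOrderedRing R] {p : R[X]} (hp : 0 < p.leadingCoeff)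
    (hroots : card p.roots = p.natDegree) (hneg : ∀ x ∈ p.roots, x < 0) {k : ℕ}
    (hk : k ≤ p.natDegree) : 0 < p.coeff k := by
  rw [coeff_eq_esymm_roots_of_card hroots hk, mul_assoc, ← esymm_neg]
  refine mul_pos hp (esymm_pos ?_ ?_)
  · simpa only [mem_map, forall_exists_index, and_imp, forall_apply_eq_imp_iff₂, neg_pos]
  · rw [card_map, hroots]
    exact Nat.sub_le _ _

theorem Polynomial.coeff_pos_of_natDegree_le_card_roots_neg {R : Type*} [CommRing R]
    [LinearOrder R] [IsStrictOrderedRing R] {p : R[X]} (hp : 0 < p.leadingCoeff)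
    (hneg : p.natDegree ≤ card (p.roots.filter (· < 0))) {k : ℕ} (hk : k ≤ p.natDegree) :
    0 < p.coeff k := by
  have hfilter : card (p.roots.filter (· < 0)) ≤ card p.roots := card_le_card (filter_le _ _)
  have hroots := card_roots' p
  have hall : p.roots.filter (· < 0) = p.roots :=
    eq_of_le_of_card_le (filter_le _ _) (by omega)
  exact coeff_pos_of_forall_roots_neg hp (by omega) (filter_eq_self.1 hall) hk

noncomputable def amatCubic (α β γ δ φ κ : ℝ) : Cubic ℝ :=
  ⟨1, 1 - (α + γ + φ + κ),
    α * (β + γ + φ + κ - 1) + γ * (δ + φ + κ - 1) - β * (1 - δ) - δ * κ,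
    (α * γ - β * (1 - α)) * (1 - δ - φ - κ) + (α - β) * δ * κ⟩

theorem charpoly_Amat (α β γ δ φ κ : ℝ) :
    (Amat α β γ δ φ κ).charpoly = (X - C 1) * (amatCubic α β γ δ φ κ).toPoly := by
  rw [Matrix.charpoly, Matrix.det_succ_row_zero]
  simp [Fin.sum_univ_succ, Matrix.det_fin_three, Amat, Matrix.charmatrix_apply, Fin.succAbove,
    amatCubic, Cubic.toPoly]
  ring

theorem amatCubic_c_nonpos {α β γ δ φ κ : ℝ} (hα : 0 ≤ α) (hβ : 0 ≤ β) (hγ : 0 ≤ γ)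
    (hδ : 0 ≤ δ) (hφ : 0 ≤ φ) (hκ : 0 ≤ κ) (hβγ : β + γ ≤ 1) (hδφ : δ + φ ≤ 1)
    (hb : 0 ≤ (amatCubic α β γ δ φ κ).b) : (amatCubic α β γ δ φ κ).c ≤ 0 := by
  simp only [amatCubic] at hb ⊢
  -- `c` is affine in `β` with slope `α + δ - 1`: the worst case is `β = 0` or `β = 1 - γ`.
  rcases le_or_gt (α + δ) 1 with hαδ | hαδ
  · rcases le_or_gt γ δ with hγδ | hγδ
    · nlinarith [mul_nonneg hβ (by linarith : (0:ℝ) ≤ 1 - α - δ),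
        mul_nonneg hγ (by linarith : (0:ℝ) ≤ 1 - δ - φ),
        mul_nonneg hκ (by linarith : (0:ℝ) ≤ δ - γ),
        mul_nonneg hα (by linarith : (0:ℝ) ≤ 1 - γ - φ - κ)]
    · nlinarith [mul_nonneg hβ (by linarith : (0:ℝ) ≤ 1 - α - δ),
        mul_nonneg (by linarith : (0:ℝ) ≤ γ - δ) (by linarith : (0:ℝ) ≤ 1 - α - γ - φ - κ),
        sq_nonneg (γ - δ),
        mul_nonneg hδ (by linarith : (0:ℝ) ≤ 1 - δ - φ),
        mul_nonneg hα (by linarith : (0:ℝ) ≤ 1 - α - γ - φ - κ),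
        mul_nonneg hα (by linarith : (0:ℝ) ≤ α + γ - δ)]
  · nlinarith [mul_nonneg (by linarith : (0:ℝ) ≤ 1 - β - γ) (by linarith : (0:ℝ) ≤ α + δ - 1),
      mul_nonneg (by linarith : (0:ℝ) ≤ 1 - κ) (by linarith : (0:ℝ) ≤ 1 - δ - φ),
      mul_nonneg hφ (by linarith : (0:ℝ) ≤ 1 - α - γ - κ),
      mul_nonneg hκ (by linarith : (0:ℝ) ≤ 1 - α - γ)]

theorem stmt_10_general (α β γ δ φ κ : ℝ)
    (hα : 0 ≤ α) (hβ : 0 ≤ β)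
    (hγ : 0 ≤ γ) (hδ : 0 ≤ δ)
    (hφ : 0 ≤ φ) (hκ : 0 ≤ κ)
    (hβγ : β + γ ≤ 1) (hδφ : δ + φ ≤ 1) :
    ((Matrix.charpoly (Amat α β γ δ φ κ)).roots.filter (fun x : ℝ => x < 0)).card
      ≤ 2 := by
  set P := amatCubic α β γ δ φ κ
  have hPa : P.a = 1 := rfl
  have hP_deg : P.toPoly.natDegree = 3 := Cubic.natDegree_of_a_ne_zero (hPa ▸ one_ne_zero)
  have hP_lead : 0 < P.toPoly.leadingCoeff := by
    rw [Cubic.leadingCoeff_of_a_ne_zero (hPa ▸ one_ne_zero), hPa]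
    exact one_pos
  have hne : (X - C 1) * P.toPoly ≠ 0 :=
    ((monic_X_sub_C 1).mul (Cubic.monic_of_a_eq_one hPa)).ne_zero
  rw [charpoly_Amat, roots_mul hne, roots_X_sub_C, singleton_add,
    filter_cons_of_neg _ (by norm_num)]
  by_contra! h3
  have hneg : P.toPoly.natDegree ≤ card (P.toPoly.roots.filter (· < 0)) := by omega
  have hb := coeff_pos_of_natDegree_le_card_roots_neg hP_lead hneg (k := 2) (by omega)
  have hc := coeff_pos_of_natDegree_le_card_roots_neg hP_lead hneg (k := 1) (by omega)
  rw [Cubic.coeff_eq_b] at hb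
  rw [Cubic.coeff_eq_c] at hc
  exact hc.not_ge (amatCubic_c_nonpos hα hβ hγ hδ hφ hκ hβγ hδφ hb.le)

theorem stmt_10 (α β γ δ φ κ : ℝ)
    (hα : 0 ≤ α) (hα1 : α ≤ 1) (hβ : 0 ≤ β) (hβ1 : β ≤ 1)
    (hγ : 0 ≤ γ) (hγ1 : γ ≤ 1) (hδ : 0 ≤ δ) (hδ1 : δ ≤ 1)
    (hφ : 0 ≤ φ) (hφ1 : φ ≤ 1) (hκ : 0 ≤ κ) (hκ1 : κ ≤ 1)
    (hβγ : β + γ ≤ 1) (hδφ : δ + φ ≤ 1)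
    (irr1 : α < 1) (irr2 : 0 < β) (irr3 : β + γ < 1)
    (irr4 : 0 < δ) (irr5 : δ + φ < 1) (irr6 : κ < 1) :
    ((Matrix.charpoly (Amat α β γ δ φ κ)).roots.filter (fun x : ℝ => x < 0)).card
      ≤ 2 :=
  stmt_10_general α β γ δ φ κ hα hβ hγ hδ hφ hκ hβγ hδφ
end

section
/- Suppose the irreducibility conditions hold: α < 1, β > 0, β+γ < 1, δ > 0, δ+φ < 1, κ < 1. Then the characteristic polynomial of A splits over ℝ, 1 is its largest real root, and when its four real roots are ordered as λ₁ ≥ λ₂ ≥ λ₃ ≥ λ₄ (with λ₁ = 1, counted with multiplicity), the second largest eigenvalue satisfies λ₂ ≥ 0. -/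
/-!
Let `π` be the stationary distribution of the birth–death chain `A`. Detailed balance
`π i A i j = π j A j i` makes `S = D A D⁻¹`, with `D = diag (√π)`, a symmetric matrix with the
characteristic polynomial of `A`, so the spectrum is real. Gershgorin's theorem bounds every
eigenvalue of a stochastic matrix by `1`, and `A 𝟙 = 𝟙`, so the top eigenvalue is `1`. Finally,
the quadratic form of `S` is `α a² + κ b² ≥ 0` on the plane spanned by the first and last
coordinate vectors; a plane meets the orthogonal complement of the top eigenvector, so the
second eigenvalue is nonnegative.
-/

open Module Matrix

namespace LinearMap.IsSymmetric

variable {E : Type*} [NormedAddCommGroup E] [InnerProductSpace ℝ E] [FiniteDimensional ℝ E]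
  {T : E →ₗ[ℝ] E} {n : ℕ}

theorem inner_apply_self_eq_sum (hT : T.IsSymmetric) (hn : finrank ℝ E = n) (x : E) :
    inner ℝ (T x) x = ∑ i, hT.eigenvalues hn i * (hT.eigenvectorBasis hn).repr x i ^ 2 := by
  rw [← (hT.eigenvectorBasis hn).repr.inner_map_map, PiLp.inner_apply]
  simp [eigenvectorBasis_apply_self_apply, sq, mul_left_comm]

/-- One half of the Courant–Fischer min-max principle. -/
theorem eigenvalues_nonneg_of_lt_finrank (hT : T.IsSymmetric) (hn : finrank ℝ E = n)
    (W : Submodule ℝ E) (hW : ∀ x ∈ W, 0 ≤ inner ℝ (T x) x) (i : Fin n)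
    (hi : (i : ℕ) < finrank ℝ W) : 0 ≤ hT.eigenvalues hn i := by
  set b := hT.eigenvectorBasis hn
  set μ := hT.eigenvalues hn
  -- since `i < dim W`, some nonzero `x ∈ W` is orthogonal to the top `i` eigenvectors
  let f : W →ₗ[ℝ] (Fin i → ℝ) := LinearMap.pi fun j =>
    (EuclideanSpace.proj (Fin.castLE i.isLt.le j)).toLinearMap ∘ₗ b.repr.toLinearMap ∘ₗ W.subtype
  obtain ⟨⟨x, hxW⟩, hxf, hx0⟩ := Submodule.exists_mem_ne_zero_of_ne_bot
    (LinearMap.ker_ne_bot_of_finrank_lt (f := f) (by simpa using hi))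
  have hlow : ∀ j : Fin n, (j : ℕ) < i → b.repr x j = 0 := fun j hj =>
    congrFun (LinearMap.mem_ker.mp hxf) ⟨j, hj⟩
  obtain ⟨k, hk⟩ : ∃ k, b.repr x k ≠ 0 := by
    by_contra! h
    exact hx0 (Subtype.ext (b.repr.map_eq_zero_iff.mp (PiLp.ext h)))
  have hpos : 0 < ∑ j, b.repr x j ^ 2 :=
    Finset.sum_pos' (fun j _ => sq_nonneg _) ⟨k, Finset.mem_univ k, by positivity⟩
  have hbound : ∑ j, μ j * b.repr x j ^ 2 ≤ μ i * ∑ j, b.repr x j ^ 2 := by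
    rw [Finset.mul_sum]
    refine Finset.sum_le_sum fun j _ => ?_
    rcases lt_or_ge (j : ℕ) i with hj | hj
    · simp [hlow j hj]
    · exact mul_le_mul_of_nonneg_right (hT.eigenvalues_antitone hn hj) (sq_nonneg _)
  have hform := (hW x hxW).trans_eq (hT.inner_apply_self_eq_sum hn x)
  exact (mul_nonneg_iff_of_pos_right hpos).mp (hform.trans hbound)

end LinearMap.IsSymmetric

theorem EuclideanSpace.finrank_span_single_pair {n : Type*} [DecidableEq n] {i j : n}
    (hij : i ≠ j) :
    finrank ℝ (Submodule.span ℝ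
      {EuclideanSpace.single i (1 : ℝ), EuclideanSpace.single j 1}) = 2 := by
  have hind :
      LinearIndependent ℝ ![EuclideanSpace.single i (1 : ℝ), EuclideanSpace.single j 1] := by
    rw [LinearIndependent.pair_iff]
    intro s t hst
    have hi := congrArg (fun x : EuclideanSpace ℝ n => x i) hst
    have hj := congrArg (fun x : EuclideanSpace ℝ n => x j) hst
    simp [hij, hij.symm] at hi hj
    exact ⟨hi, hj⟩
  rw [← Matrix.range_cons_cons_empty _ _ ![], finrank_span_eq_card hind, Fintype.card_fin]

namespace Matrix

variable {n : Type*} [Fintype n] [DecidableEq n]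

theorem charpoly_diagonal_mul_mul_diagonal_inv {K : Type*} [Field K] (A : Matrix n n K)
    {d : n → K} (hd : ∀ i, d i ≠ 0) : (diagonal d * A * diagonal d⁻¹).charpoly = A.charpoly := by
  rw [charpoly_mul_comm, ← mul_assoc, diagonal_mul_diagonal]
  simp [inv_mul_cancel₀ (hd _)]

noncomputable def symmetrize (π : n → ℝ) (A : Matrix n n ℝ) : Matrix n n ℝ :=
  diagonal (fun i => √(π i)) * A * diagonal (fun i => √(π i))⁻¹

theorem symmetrize_apply (π : n → ℝ) (A : Matrix n n ℝ) (i j : n) :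
    A.symmetrize π i j = √(π i) * A i j * (√(π j))⁻¹ := by
  simp [symmetrize]

theorem symmetrize_apply_self {π : n → ℝ} (A : Matrix n n ℝ) {i : n} (hπ : 0 < π i) :
    A.symmetrize π i i = A i i := by
  rw [symmetrize_apply, mul_comm (√(π i)), mul_inv_cancel_right₀ (Real.sqrt_pos.mpr hπ).ne']

theorem charpoly_symmetrize {π : n → ℝ} (A : Matrix n n ℝ) (hπ : ∀ i, 0 < π i) :
    (A.symmetrize π).charpoly = A.charpoly :=
  charpoly_diagonal_mul_mul_diagonal_inv A fun i => (Real.sqrt_pos.mpr (hπ i)).ne'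

theorem isHermitian_symmetrize_of_detailed_balance (A : Matrix n n ℝ) {π : n → ℝ}
    (hπ : ∀ i, 0 < π i) (hA : ∀ i j, π i * A i j = π j * A j i) :
    (A.symmetrize π).IsHermitian := by
  ext i j
  have hi := Real.sqrt_pos.mpr (hπ i)
  have hj := Real.sqrt_pos.mpr (hπ j)
  simp only [conjTranspose_apply, star_trivial, symmetrize_apply]
  field_simp
  rw [Real.sq_sqrt (hπ i).le, Real.sq_sqrt (hπ j).le, hA i j]

theorem le_one_of_mem_roots_charpoly {A : Matrix n n ℝ} (hA : ∀ i j, i ≠ j → 0 ≤ A i j)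
    (hrow : ∀ i, ∑ j, A i j = 1) {μ : ℝ} (hμ : μ ∈ A.charpoly.roots) : μ ≤ 1 := by
  rw [Polynomial.mem_roots (charpoly_monic A).ne_zero, ← charpoly_toLin',
    ← Module.End.hasEigenvalue_iff_isRoot_charpoly] at hμ
  obtain ⟨k, hk⟩ := eigenvalue_mem_ball hμ
  have hrad : ∑ j ∈ Finset.univ.erase k, ‖A k j‖ = 1 - A k k := by
    rw [← hrow k, ← Finset.add_sum_erase _ _ (Finset.mem_univ k), add_sub_cancel_left]
    exact Finset.sum_congr rfl fun j hj =>
      Real.norm_of_nonneg (hA k j (Finset.ne_of_mem_erase hj).symm)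
  rw [hrad, Metric.mem_closedBall, Real.dist_eq] at hk
  linarith [le_abs_self (μ - A k k)]

theorem one_mem_roots_charpoly [Nonempty n] {A : Matrix n n ℝ}
    (hrow : ∀ i, ∑ j, A i j = 1) : (1 : ℝ) ∈ A.charpoly.roots := by
  rw [Polynomial.mem_roots (charpoly_monic A).ne_zero, ← charpoly_toLin',
    ← Module.End.hasEigenvalue_iff_isRoot_charpoly]
  refine Module.End.hasEigenvalue_of_hasEigenvector (x := fun _ => 1) ⟨?_, ?_⟩
  · rw [Module.End.mem_eigenspace_iff]
    ext i
    simp [mulVec, dotProduct, hrow]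
  · exact Function.ne_iff.mpr ⟨Classical.arbitrary n, one_ne_zero⟩

theorem charpoly_toEuclideanLin (M : Matrix n n ℝ) :
    (toEuclideanLin M).charpoly = M.charpoly := by
  rw [toEuclideanLin_eq_toLin_orthonormal, charpoly_toLin]

theorem inner_toEuclideanLin_self_nonneg_of_mem_span_pair (S : Matrix n n ℝ) {i j : n}
    (hii : 0 ≤ S i i) (hjj : 0 ≤ S j j) (hij : S i j = 0) (hji : S j i = 0)
    {x : EuclideanSpace ℝ n}
    (hx : x ∈ Submodule.span ℝ {EuclideanSpace.single i (1 : ℝ), EuclideanSpace.single j 1}) :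
    0 ≤ inner ℝ (toEuclideanLin S x) x := by
  obtain ⟨a, b, rfl⟩ := Submodule.mem_span_pair.mp hx
  set x := a • EuclideanSpace.single i (1 : ℝ) + b • EuclideanSpace.single j 1
  have hform : inner ℝ (toEuclideanLin S x) x = a ^ 2 * S i i + b ^ 2 * S j j := by
    simp [x, EuclideanSpace.inner_eq_star_dotProduct, toLpLin_apply, mulVec_add, mulVec_smul,
      add_dotProduct, dotProduct_add, hij, hji]
    ring
  rw [hform]
  positivity

end Matrix

theorem Amat_offDiag_nonneg {α β γ δ φ κ : ℝ} (hα1 : α ≤ 1) (hβ : 0 ≤ β) (hβγ : β + γ ≤ 1)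
    (hδ : 0 ≤ δ) (hδφ : δ + φ ≤ 1) (hκ1 : κ ≤ 1) :
    ∀ i j, i ≠ j → 0 ≤ Amat α β γ δ φ κ i j := by
  intro i j hij
  fin_cases i <;> fin_cases j <;> simp_all [Amat] <;> linarith

theorem Amat_sum_row_eq_one (α β γ δ φ κ : ℝ) (i : Fin 4) : ∑ j, Amat α β γ δ φ κ i j = 1 := by
  fin_cases i <;> simp [Amat, Fin.sum_univ_four]

/-- The witness is the (unnormalised) stationary distribution of the birth–death chain. -/
theorem Amat_detailed_balance {α β γ δ φ κ : ℝ} (irr1 : α < 1) (irr2 : 0 < β) (irr3 : β + γ < 1)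
    (irr4 : 0 < δ) (irr5 : δ + φ < 1) (irr6 : κ < 1) :
    ∃ π : Fin 4 → ℝ, (∀ i, 0 < π i) ∧
      ∀ i j, π i * Amat α β γ δ φ κ i j = π j * Amat α β γ δ φ κ j i := by
  have h1 : 0 < 1 - α := by linarith
  have h2 : 0 < 1 - β - γ := by linarith
  have h3 : 0 < 1 - δ - φ := by linarith
  have h4 : 0 < 1 - κ := by linarith
  set p1 := (1 - α) / β
  set p2 := p1 * (1 - β - γ) / δ
  set p3 := p2 * (1 - δ - φ) / (1 - κ)
  refine ⟨![1, p1, p2, p3], fun i => ?_, fun i j => ?_⟩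
  · fin_cases i <;> simp [p1, p2, p3] <;> positivity
  · fin_cases i <;> fin_cases j <;> simp [Amat, p1, p2, p3] <;> field_simp

theorem stmt_11_general (α β γ δ φ κ : ℝ)
    (hα : 0 ≤ α) (hα1 : α ≤ 1) (hβ : 0 ≤ β) (hδ : 0 ≤ δ) (hκ : 0 ≤ κ) (hκ1 : κ ≤ 1)
    (hβγ : β + γ ≤ 1) (hδφ : δ + φ ≤ 1)
    (irr1 : α < 1) (irr2 : 0 < β) (irr3 : β + γ < 1)
    (irr4 : 0 < δ) (irr5 : δ + φ < 1) (irr6 : κ < 1) :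
    Polynomial.Splits (Matrix.charpoly (Amat α β γ δ φ κ)) ∧
    ∃ l2 l3 l4 : ℝ,
      (Matrix.charpoly (Amat α β γ δ φ κ)).roots = {1, l2, l3, l4} ∧
      l2 ≤ 1 ∧ l3 ≤ l2 ∧ l4 ≤ l3 ∧ 0 ≤ l2 := by
  set A := Amat α β γ δ φ κ
  obtain ⟨π, hπ, hbal⟩ := Amat_detailed_balance irr1 irr2 irr3 irr4 irr5 irr6
  set S := A.symmetrize π
  have hT :=
    isSymmetric_toEuclideanLin_iff.mpr (isHermitian_symmetrize_of_detailed_balance A hπ hbal)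
  have hn : finrank ℝ (EuclideanSpace ℝ (Fin 4)) = 4 := finrank_euclideanSpace_fin
  set μ := hT.eigenvalues hn
  have anti := hT.eigenvalues_antitone hn
  have hchar : (toEuclideanLin S).charpoly = A.charpoly := by
    rw [charpoly_toEuclideanLin, charpoly_symmetrize A hπ]
  have hroots : A.charpoly.roots = Multiset.map μ Finset.univ.val := by
    rw [← hchar, hT.roots_charpoly_eq_eigenvalues hn]
    rfl
  have hle : ∀ i, μ i ≤ 1 := fun i =>
    le_one_of_mem_roots_charpoly (Amat_offDiag_nonneg hα1 hβ hβγ hδ hδφ hκ1)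
      (Amat_sum_row_eq_one α β γ δ φ κ)
      (hroots ▸ Multiset.mem_map_of_mem μ (Finset.mem_univ_val i))
  have hμ0 : μ 0 = 1 := by
    obtain ⟨k, -, hk⟩ :=
      Multiset.mem_map.mp (hroots ▸ one_mem_roots_charpoly (Amat_sum_row_eq_one α β γ δ φ κ))
    exact le_antisymm (hle 0) (hk ▸ anti (Fin.zero_le k))
  have hμ1 : 0 ≤ μ 1 :=
    hT.eigenvalues_nonneg_of_lt_finrank hn _
      (fun x hx => inner_toEuclideanLin_self_nonneg_of_mem_span_pair S (i := 0) (j := 3)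
        (hα.trans_eq (symmetrize_apply_self A (hπ 0)).symm)
        (hκ.trans_eq (symmetrize_apply_self A (hπ 3)).symm)
        (by simp [S, symmetrize_apply, A, Amat]) (by simp [S, symmetrize_apply, A, Amat]) hx)
      1 (by rw [EuclideanSpace.finrank_span_single_pair (by decide)]; decide)
  exact ⟨hchar ▸ hT.splits_charpoly, μ 1, μ 2, μ 3, by rw [hroots, ← hμ0]; rfl, hle 1,
    anti (by decide), anti (by decide), hμ1⟩

theorem stmt_11 (α β γ δ φ κ : ℝ)
    (hα : 0 ≤ α) (hα1 : α ≤ 1) (hβ : 0 ≤ β) (hβ1 : β ≤ 1)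
    (hγ : 0 ≤ γ) (hγ1 : γ ≤ 1) (hδ : 0 ≤ δ) (hδ1 : δ ≤ 1)
    (hφ : 0 ≤ φ) (hφ1 : φ ≤ 1) (hκ : 0 ≤ κ) (hκ1 : κ ≤ 1)
    (hβγ : β + γ ≤ 1) (hδφ : δ + φ ≤ 1)
    (irr1 : α < 1) (irr2 : 0 < β) (irr3 : β + γ < 1)
    (irr4 : 0 < δ) (irr5 : δ + φ < 1) (irr6 : κ < 1) :
    Polynomial.Splits (Matrix.charpoly (Amat α β γ δ φ κ)) ∧
    ∃ l2 l3 l4 : ℝ,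
      (Matrix.charpoly (Amat α β γ δ φ κ)).roots = {1, l2, l3, l4} ∧
      l2 ≤ 1 ∧ l3 ≤ l2 ∧ l4 ≤ l3 ∧ 0 ≤ l2 :=
  stmt_11_general α β γ δ φ κ hα hα1 hβ hδ hκ hκ1 hβγ hδφ irr1 irr2 irr3 irr4 irr5 irr6
end

section
/- Every 4×4 tridiagonal row-stochastic matrix A = A(α,β,γ,δ,φ,κ) (irreducible or not) has at most two negative eigenvalues: the number of roots of the characteristic polynomial of A over ℂ, counted with multiplicity, that are negative real numbers is at most 2. Equivalently, since 1 is always an eigenvalue of A, the second largest real eigenvalue of A is nonnegative: λ₂(A) ≥ 0. -/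
open Matrix Polynomial Finset

namespace Matrix

section RowStochastic

variable {n : Type*} [Fintype n] [DecidableEq n] {M : Matrix n n ℝ}

lemma isRoot_charpoly_one_of_mem_rowStochastic [Nonempty n] (hM : M ∈ rowStochastic ℝ n) :
    M.charpoly.IsRoot 1 := by
  rw [IsRoot, eval_charpoly, ← exists_mulVec_eq_zero_iff]
  refine ⟨1, one_ne_zero, ?_⟩
  rw [sub_mulVec, one_vecMul_of_mem_rowStochastic hM, map_one, one_mulVec, sub_self]

lemma le_one_of_isRoot_charpoly_of_mem_rowStochastic (hM : M ∈ rowStochastic ℝ n) {r : ℝ}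
    (hr : M.charpoly.IsRoot r) : r ≤ 1 := by
  have hr' : Module.End.HasEigenvalue (toLin' M) r := by
    rw [Module.End.hasEigenvalue_iff_mem_spectrum, spectrum_toLin']
    exact mem_spectrum_iff_isRoot_charpoly.mpr hr
  obtain ⟨k, hk⟩ := eigenvalue_mem_ball hr'
  have hrow : ∑ j ∈ univ.erase k, ‖M k j‖ = 1 - M k k := by
    rw [← sum_row_of_mem_rowStochastic hM k, ← sum_erase_add _ _ (mem_univ k),
      add_sub_cancel_right]
    exact sum_congr rfl fun j _ => Real.norm_of_nonneg (nonneg_of_mem_rowStochastic hM)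
  rw [hrow, Metric.mem_closedBall, Real.dist_eq] at hk
  linarith [le_abs_self (r - M k k)]

end RowStochastic

lemma charpoly_tridiagonal_four {R : Type*} [CommRing R] (a₀ a₁ a₂ a₃ b₀ b₁ b₂ c₀ c₁ c₂ : R) :
    (!![a₀, b₀, 0, 0; c₀, a₁, b₁, 0; 0, c₁, a₂, b₂; 0, 0, c₂, a₃]).charpoly =
      (X - C a₀) * (X - C a₁) * (X - C a₂) * (X - C a₃) - C (b₀ * c₀) * (X - C a₂) * (X - C a₃)
        - C (b₁ * c₁) * (X - C a₀) * (X - C a₃) - C (b₂ * c₂) * (X - C a₀) * (X - C a₁)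
        + C (b₀ * c₀ * (b₂ * c₂)) := by
  rw [charpoly, det_succ_row_zero, Fin.sum_univ_four]
  simp [det_fin_three, Fin.succAbove, Fin.lt_def]
  ring

namespace IsHermitian

variable {n : Type*} [Fintype n] [DecidableEq n] {T : Matrix n n ℝ} (hT : T.IsHermitian)
include hT

lemma dotProduct_mulVec_self_eq_sum (x : n → ℝ) :
    x ⬝ᵥ T *ᵥ x =
      ∑ i, hT.eigenvalues i * ((hT.eigenvectorUnitary : Matrix n n ℝ)ᵀ *ᵥ x) i ^ 2 := by
  set U := (hT.eigenvectorUnitary : Matrix n n ℝ)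
  have hT' : T = U * diagonal hT.eigenvalues * Uᵀ := by
    simpa [Unitary.conjStarAlgAut_apply, star_eq_conjTranspose] using hT.spectral_theorem
  conv_lhs => rw [hT', ← mulVec_mulVec, ← mulVec_mulVec, dotProduct_mulVec, ← mulVec_transpose]
  simp [dotProduct, mulVec_diagonal, sq, mul_left_comm]

lemma eigenvectorUnitary_transpose_mulVec_ne_zero {x : n → ℝ} (hx : x ≠ 0) :
    (hT.eigenvectorUnitary : Matrix n n ℝ)ᵀ *ᵥ x ≠ 0 := by
  set U := (hT.eigenvectorUnitary : Matrix n n ℝ)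
  have hUU : U * Uᵀ = 1 := by
    simpa [star_eq_conjTranspose] using mem_unitaryGroup_iff.mp hT.eigenvectorUnitary.2
  intro h
  rw [← one_mulVec x, ← hUU, ← mulVec_mulVec, h, mulVec_zero] at hx
  exact hx rfl

lemma dotProduct_mulVec_self_neg {x : n → ℝ} (hx : x ≠ 0)
    (hperp : ∀ i, 0 ≤ hT.eigenvalues i → ((hT.eigenvectorUnitary : Matrix n n ℝ)ᵀ *ᵥ x) i = 0) :
    x ⬝ᵥ T *ᵥ x < 0 := by
  rw [hT.dotProduct_mulVec_self_eq_sum]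
  obtain ⟨i₀, hi₀⟩ := Function.ne_iff.mp (hT.eigenvectorUnitary_transpose_mulVec_ne_zero hx)
  apply sum_neg'
  · intro i _
    by_cases hi : 0 ≤ hT.eigenvalues i
    · simp [hperp i hi]
    · exact mul_nonpos_of_nonpos_of_nonneg (by linarith) (sq_nonneg _)
  · refine ⟨i₀, mem_univ _, mul_neg_of_neg_of_pos ?_ (sq_pos_of_ne_zero hi₀)⟩
    by_contra h
    exact hi₀ (hperp i₀ (not_lt.mp h))

/-- The negative eigenvectors span a space `W` on which the quadratic form of `T` is negative
definite, and the hypothesis forbids `W ∩ S⁻¹ W ≠ 0`. -/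
theorem two_mul_card_neg_eigenvalues_le (S : Matrix n n ℝ) (hS : Function.Injective S.mulVec)
    (hS_nonneg : ∀ x, 0 ≤ x ⬝ᵥ T *ᵥ x + (S *ᵥ x) ⬝ᵥ T *ᵥ (S *ᵥ x)) :
    2 * #{i | hT.eigenvalues i < 0} ≤ Fintype.card n := by
  set U := (hT.eigenvectorUnitary : Matrix n n ℝ)
  by_contra! hlt
  let N := {i // 0 ≤ hT.eigenvalues i}
  have hN : Fintype.card N + #{i | hT.eigenvalues i < 0} = Fintype.card n := by
    rw [Fintype.card_subtype, ← card_univ]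
    simpa only [not_le] using card_filter_add_card_filter_not (s := univ) (0 ≤ hT.eigenvalues ·)
  let P : (n → ℝ) →ₗ[ℝ] (N → ℝ) := LinearMap.funLeft ℝ ℝ Subtype.val
  let L := (P ∘ₗ Uᵀ.mulVecLin).prod (P ∘ₗ (Uᵀ * S).mulVecLin)
  obtain ⟨x, hx, hx0⟩ := Submodule.exists_mem_ne_zero_of_ne_bot <|
    L.ker_ne_bot_of_finrank_lt (by simp; omega)
  have hLx : L x = 0 := hx
  simp only [L, LinearMap.coe_prod, Function.prod_apply, Prod.mk_eq_zero, LinearMap.comp_apply,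
    mulVecLin_apply, ← mulVec_mulVec] at hLx
  have hperp : ∀ y, P (Uᵀ *ᵥ y) = 0 → ∀ i, 0 ≤ hT.eigenvalues i → (Uᵀ *ᵥ y) i = 0 :=
    fun y hy i hi => congrFun hy ⟨i, hi⟩
  have hSx0 : S *ᵥ x ≠ 0 := fun h => hx0 (hS (h.trans (mulVec_zero S).symm))
  linarith [hS_nonneg x, hT.dotProduct_mulVec_self_neg hx0 (hperp x hLx.1),
    hT.dotProduct_mulVec_self_neg hSx0 (hperp _ hLx.2)]

lemma card_filter_neg_roots_charpoly :
    Multiset.card (T.charpoly.roots.filter (· < 0)) = #{i | hT.eigenvalues i < 0} := by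
  rw [hT.roots_charpoly_eq_eigenvalues, Multiset.filter_map, Multiset.card_map]
  rfl

theorem two_mul_card_filter_neg_roots_charpoly_le_of_bipartite (c : n → Bool)
    (hdiag : ∀ i, 0 ≤ T i i) (hT0 : ∀ i j, i ≠ j → c i = c j → T i j = 0) :
    2 * Multiset.card (T.charpoly.roots.filter (· < 0)) ≤ Fintype.card n := by
  set s : n → ℝ := fun i => if c i then 1 else -1
  have hss : ∀ i, s i * s i = 1 := fun i => by by_cases h : c i <;> simp [s, h]
  have hSS : diagonal s * diagonal s = 1 := by rw [diagonal_mul_diagonal, funext hss, diagonal_one]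
  rw [hT.card_filter_neg_roots_charpoly]
  refine hT.two_mul_card_neg_eigenvalues_le (diagonal s) ?_ fun x => ?_
  · intro x y hxy
    simpa [mulVec_mulVec, hSS] using congrArg (diagonal s *ᵥ ·) hxy
  · rw [show diagonal s *ᵥ x = fun i => s i * x i from funext (mulVec_diagonal s x)]
    simp only [dotProduct, mulVec, ← sum_add_distrib, mul_sum]
    refine sum_nonneg fun i _ => sum_nonneg fun j _ => ?_
    by_cases hij : i = j
    · subst hij
      nlinarith [hss i, mul_nonneg (hdiag i) (sq_nonneg (x i))]
    by_cases hc : c i = c j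
    · simp [hT0 i j hij hc]
    · have : s i * s j = -1 := by
        cases h : c i <;> cases h' : c j <;> simp_all [s]
      exact le_of_eq (by linear_combination (-(T i j * x i * x j)) * this)

end IsHermitian

lemma card_filter_neg_roots_charpoly_map_ofReal {n : Type*} [Fintype n] [DecidableEq n]
    {M : Matrix n n ℝ} (hM : M.charpoly.Splits) :
    Multiset.card ((M.map Complex.ofReal).charpoly.roots.filter (fun z => z.im = 0 ∧ z.re < 0)) =
      Multiset.card (M.charpoly.roots.filter (· < 0)) := by
  rw [show M.map Complex.ofReal = M.map Complex.ofRealHom from rfl, charpoly_map, hM.roots_map,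
    Multiset.filter_map, Multiset.card_map]
  simp only [Function.comp_def, Complex.ofRealHom_eq_coe, Complex.ofReal_im, Complex.ofReal_re,
    true_and]

lemma IsHermitian.exists_roots_charpoly_eq_sorted_of_isRoot_one {T : Matrix (Fin 4) (Fin 4) ℝ}
    (hT : T.IsHermitian) (h1 : T.charpoly.IsRoot 1) (hle : ∀ r, T.charpoly.IsRoot r → r ≤ 1)
    (hneg : 2 * Multiset.card (T.charpoly.roots.filter (· < 0)) ≤ 4) :
    ∃ l₂ l₃ l₄ : ℝ, T.charpoly.roots = {1, l₂, l₃, l₄} ∧ l₂ ≤ 1 ∧ l₃ ≤ l₂ ∧ l₄ ≤ l₃ ∧ 0 ≤ l₂ := by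
  set e := hT.eigenvalues₀
  have he : Antitone e := hT.eigenvalues₀_antitone
  have hroots : T.charpoly.roots = {e 0, e 1, e 2, e 3} := by
    rw [hT.roots_charpoly_eq_eigenvalues₀, Fin.univ_val_map]
    simp only [Fintype.card_fin, List.ofFn_succ, RCLike.ofReal_real_eq_id, Function.comp_apply,
      id_eq, Fin.succ_zero_eq_one, Fin.succ_one_eq_two, Fin.reduceSucc, List.ofFn_zero,
      Multiset.insert_eq_cons]
    rfl
  have he0 : e 0 = 1 := by
    have h1' : (1 : ℝ) ∈ T.charpoly.roots := (mem_roots (charpoly_monic T).ne_zero).mpr h1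
    refine le_antisymm (hle _ (isRoot_of_mem_roots (hroots ▸ by simp))) ?_
    rw [hroots] at h1'
    simp only [Multiset.insert_eq_cons, Multiset.mem_cons, Multiset.mem_singleton] at h1'
    rcases h1' with h | h | h | h <;> rw [h] <;> exact he (by decide)
  refine ⟨e 1, e 2, e 3, by rw [hroots, he0], he0 ▸ he (by decide), he (by decide),
    he (by decide), ?_⟩
  by_contra! h₁
  have h₂ : e 2 < 0 := (he (by decide)).trans_lt h₁
  have h₃ : e 3 < 0 := (he (by decide)).trans_lt h₂
  rw [hroots] at hneg
  simp [Multiset.filter_singleton, he0, h₁, h₂, h₃] at hneg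

end Matrix

/-- When the off-diagonal entries of `Amat` are positive, `Amat` is conjugate to this symmetric
matrix by a positive diagonal matrix. -/
noncomputable def symmAmat (α β γ δ φ κ : ℝ) : Matrix (Fin 4) (Fin 4) ℝ :=
  !![α, √((1-α)*β), 0, 0;
     √((1-α)*β), γ, √((1-β-γ)*δ), 0;
     0, √((1-β-γ)*δ), φ, √((1-δ-φ)*(1-κ));
     0, 0, √((1-δ-φ)*(1-κ)), κ]

lemma isHermitian_symmAmat (α β γ δ φ κ : ℝ) : (symmAmat α β γ δ φ κ).IsHermitian := by
  ext i j
  fin_cases i <;> fin_cases j <;> simp [symmAmat]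

lemma charpoly_Amat_eq_charpoly_symmAmat {α β γ δ φ κ : ℝ} (h₀ : 0 ≤ (1-α)*β)
    (h₁ : 0 ≤ (1-β-γ)*δ) (h₂ : 0 ≤ (1-δ-φ)*(1-κ)) :
    (Amat α β γ δ φ κ).charpoly = (symmAmat α β γ δ φ κ).charpoly := by
  rw [Amat, symmAmat, charpoly_tridiagonal_four, charpoly_tridiagonal_four, Real.mul_self_sqrt h₀,
    Real.mul_self_sqrt h₁, Real.mul_self_sqrt h₂]

lemma Amat_mem_rowStochastic {α β γ δ φ κ : ℝ} (hα : 0 ≤ α) (hα1 : α ≤ 1) (hβ : 0 ≤ β)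
    (hγ : 0 ≤ γ) (hδ : 0 ≤ δ) (hφ : 0 ≤ φ) (hκ : 0 ≤ κ) (hκ1 : κ ≤ 1) (hβγ : β + γ ≤ 1)
    (hδφ : δ + φ ≤ 1) :
    Amat α β γ δ φ κ ∈ rowStochastic ℝ (Fin 4) := by
  refine mem_rowStochastic_iff_sum.mpr ⟨fun i j => ?_, fun i => ?_⟩
  · fin_cases i <;> fin_cases j <;> simp [Amat] <;> linarith
  · fin_cases i <;> simp [Amat, Fin.sum_univ_four]

lemma two_mul_card_filter_neg_roots_charpoly_symmAmat_le {α β γ δ φ κ : ℝ} (hα : 0 ≤ α)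
    (hγ : 0 ≤ γ) (hφ : 0 ≤ φ) (hκ : 0 ≤ κ) :
    2 * Multiset.card ((symmAmat α β γ δ φ κ).charpoly.roots.filter (· < 0)) ≤ 4 := by
  refine (isHermitian_symmAmat α β γ δ φ κ).two_mul_card_filter_neg_roots_charpoly_le_of_bipartite
    ![true, false, true, false] (fun i => ?_) (fun i j hij hc => ?_)
  · fin_cases i <;> simpa [symmAmat]
  · fin_cases i <;> fin_cases j <;> simp_all [symmAmat]

theorem stmt_15_general (α β γ δ φ κ : ℝ)
    (hα : 0 ≤ α) (hα1 : α ≤ 1) (hβ : 0 ≤ β)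
    (hγ : 0 ≤ γ) (hδ : 0 ≤ δ)
    (hφ : 0 ≤ φ) (hκ : 0 ≤ κ) (hκ1 : κ ≤ 1)
    (hβγ : β + γ ≤ 1) (hδφ : δ + φ ≤ 1) :
    ((Matrix.charpoly ((Amat α β γ δ φ κ).map (Complex.ofReal : ℝ → ℂ))).roots.filter
        (fun z : ℂ => z.im = 0 ∧ z.re < 0)).card ≤ 2 ∧
    ∃ l2 l3 l4 : ℝ,
      (Matrix.charpoly (Amat α β γ δ φ κ)).roots = {1, l2, l3, l4} ∧
      l2 ≤ 1 ∧ l3 ≤ l2 ∧ l4 ≤ l3 ∧ 0 ≤ l2 := by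
  have hA := Amat_mem_rowStochastic hα hα1 hβ hγ hδ hφ hκ hκ1 hβγ hδφ
  have hT := isHermitian_symmAmat α β γ δ φ κ
  have hcp : (Amat α β γ δ φ κ).charpoly = (symmAmat α β γ δ φ κ).charpoly :=
    charpoly_Amat_eq_charpoly_symmAmat (mul_nonneg (by linarith) hβ) (mul_nonneg (by linarith) hδ)
      (mul_nonneg (by linarith) (by linarith))
  have hneg := two_mul_card_filter_neg_roots_charpoly_symmAmat_le (β := β) (δ := δ) hα hγ hφ hκ
  refine ⟨?_, ?_⟩
  · rw [card_filter_neg_roots_charpoly_map_ofReal (by rw [hcp]; exact hT.splits_charpoly), hcp]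
    omega
  · rw [hcp]
    refine hT.exists_roots_charpoly_eq_sorted_of_isRoot_one ?_ (fun r hr => ?_) hneg
    · rw [← hcp]
      exact isRoot_charpoly_one_of_mem_rowStochastic hA
    · rw [← hcp] at hr
      exact le_one_of_isRoot_charpoly_of_mem_rowStochastic hA hr

theorem stmt_15 (α β γ δ φ κ : ℝ)
    (hα : 0 ≤ α) (hα1 : α ≤ 1) (hβ : 0 ≤ β) (hβ1 : β ≤ 1)
    (hγ : 0 ≤ γ) (hγ1 : γ ≤ 1) (hδ : 0 ≤ δ) (hδ1 : δ ≤ 1)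
    (hφ : 0 ≤ φ) (hφ1 : φ ≤ 1) (hκ : 0 ≤ κ) (hκ1 : κ ≤ 1)
    (hβγ : β + γ ≤ 1) (hδφ : δ + φ ≤ 1) :
    ((Matrix.charpoly ((Amat α β γ δ φ κ).map (Complex.ofReal : ℝ → ℂ))).roots.filter
        (fun z : ℂ => z.im = 0 ∧ z.re < 0)).card ≤ 2 ∧
    ∃ l2 l3 l4 : ℝ,
      (Matrix.charpoly (Amat α β γ δ φ κ)).roots = {1, l2, l3, l4} ∧
      l2 ≤ 1 ∧ l3 ≤ l2 ∧ l4 ≤ l3 ∧ 0 ≤ l2 :=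
  stmt_15_general α β γ δ φ κ hα hα1 hβ hγ hδ hφ hκ hκ1 hβγ hδφ
end
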